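/- arXiv:1511.04220 — 2 statements merged into one kernel-verified Lean document; each statement's English description precedes it below -/
import Mathlib

section
/- Let n ≥ 2, h with ⌈n/2⌉ ≤ h ≤ n, and x_{(1)} ≤ ... ≤ x_{(n)} sorted real data. Then the minimum over all h-element subsets T ⊆ {x_1,...,x_n} and all m ∈ ℝ of ∑_{x∈T} |x − m| is attained by one of the n − h + 1 contiguous subsets {x_{(k)}, ..., x_{(k+h−1)}} for k = 1, ..., n−h+1, with m equal to the median of that subset. -/
private lemma vshape {n : ℕ} (x : Fin n → ℝ) (hsort : Monotone x) (m : ℝ)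
    {a i b : Fin n} (hai : a ≤ i) (hib : i ≤ b) :
    |x i - m| ≤ max |x a - m| |x b - m| := by
  have h1 : x a ≤ x i := hsort hai
  have h2 : x i ≤ x b := hsort hib
  rcases le_total (x i) m with hc | hc
  · refine le_max_of_le_left ?_
    rw [abs_of_nonpos (by linarith), abs_of_nonpos (by linarith)]
    linarith
  · refine le_max_of_le_right ?_
    rw [abs_of_nonneg (by linarith), abs_of_nonneg (by linarith)]
    linarith

private lemma exists_min_abs {n : ℕ} (x : Fin n → ℝ) (S : Finset (Fin n)) :
    ∃ m : ℝ, ∀ m' : ℝ, ∑ i ∈ S, |x i - m| ≤ ∑ i ∈ S, |x i - m'| := by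
  rcases S.eq_empty_or_nonempty with rfl | hS
  · exact ⟨0, fun m' => by simp⟩
  set lo := S.inf' hS x with hlo
  set hi := S.sup' hS x with hhi
  have hlohi : lo ≤ hi := by
    obtain ⟨j, hj⟩ := hS
    exact le_trans (Finset.inf'_le x hj) (Finset.le_sup' x hj)
  have hcont : Continuous (fun m : ℝ => ∑ i ∈ S, |x i - m|) := by
    apply continuous_finset_sum
    intro i _
    exact (continuous_const.sub continuous_id).abs
  obtain ⟨m, hmI, hmin⟩ := (isCompact_Icc (a := lo) (b := hi)).exists_isMinOn
    ⟨lo, le_refl _, hlohi⟩ hcont.continuousOn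
  have hmin' : ∀ y ∈ Set.Icc lo hi,
      ∑ i ∈ S, |x i - m| ≤ ∑ i ∈ S, |x i - y| := fun y hy => hmin hy
  refine ⟨m, fun m' => ?_⟩
  rcases le_total m' lo with h1 | h1
  · calc ∑ i ∈ S, |x i - m| ≤ ∑ i ∈ S, |x i - lo| := hmin' lo ⟨le_refl _, hlohi⟩
      _ ≤ ∑ i ∈ S, |x i - m'| := by
          apply Finset.sum_le_sum
          intro i hiS
          have hxi : lo ≤ x i := Finset.inf'_le x hiS
          rw [abs_of_nonneg (by linarith)]
          calc x i - lo ≤ x i - m' := by linarith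
            _ ≤ |x i - m'| := le_abs_self _
  rcases le_total hi m' with h2 | h2
  · calc ∑ i ∈ S, |x i - m| ≤ ∑ i ∈ S, |x i - hi| := hmin' hi ⟨hlohi, le_refl _⟩
      _ ≤ ∑ i ∈ S, |x i - m'| := by
          apply Finset.sum_le_sum
          intro i hiS
          have hxi : x i ≤ hi := Finset.le_sup' x hiS
          rw [abs_of_nonpos (by linarith)]
          have := neg_le_abs (x i - m')
          linarith
  · exact hmin' m' ⟨h1, h2⟩

private lemma window_le {n h : ℕ} (hh : 1 ≤ h) (x : Fin n → ℝ) (hsort : Monotone x)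
    (m' : ℝ) :
    ∀ d : ℕ, ∀ T : Finset (Fin n), ∀ hne : T.Nonempty, T.card = h →
      ((T.max' hne : ℕ) - (T.min' hne : ℕ)) = d →
      ∃ k : ℕ, k + h ≤ n ∧
        ∑ i ∈ Finset.univ.filter (fun i : Fin n => k ≤ (i : ℕ) ∧ (i : ℕ) < k + h),
            |x i - m'| ≤ ∑ i ∈ T, |x i - m'| := by
  intro d
  induction d using Nat.strong_induction_on with
  | _ d ih =>
  intro T hne hcard hspan
  set a := T.min' hne with ha
  set b := T.max' hne with hb
  have haT : a ∈ T := T.min'_mem hne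
  have hbT : b ∈ T := T.max'_mem hne
  have hab : a ≤ b := T.min'_le b hbT
  have habn : (a : ℕ) ≤ (b : ℕ) := hab
  have hbn : (b : ℕ) < n := b.isLt
  have hsub : T ⊆ Finset.Icc a b := fun i hi =>
    Finset.mem_Icc.2 ⟨T.min'_le i hi, T.le_max' i hi⟩
  have hcardIcc : (Finset.Icc a b).card = (b : ℕ) + 1 - (a : ℕ) := by
    rw [Fin.card_Icc]
  have hle : h ≤ (b : ℕ) + 1 - (a : ℕ) := by
    rw [← hcardIcc, ← hcard]
    exact Finset.card_le_card hsub
  by_cases hcase : (b : ℕ) + 1 - (a : ℕ) = h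
  · -- T is contiguous
    have hTeq : T = Finset.Icc a b :=
      Finset.eq_of_subset_of_card_le hsub (by rw [hcardIcc, hcard, hcase])
    refine ⟨(a : ℕ), by omega, le_of_eq ?_⟩
    have hset : Finset.univ.filter
        (fun i : Fin n => (a : ℕ) ≤ (i : ℕ) ∧ (i : ℕ) < (a : ℕ) + h) = T := by
      rw [hTeq]
      ext i
      simp only [Finset.mem_filter, Finset.mem_univ, true_and, Finset.mem_Icc,
        Fin.le_def]
      omega
    rw [hset]
  · -- there is a gap
    have hlt2 : h < (b : ℕ) + 1 - (a : ℕ) := lt_of_le_of_ne hle (Ne.symm hcase)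
    have hsd : (Finset.Icc a b \ T).Nonempty := by
      rw [← Finset.card_pos, Finset.card_sdiff_of_subset hsub, hcard, hcardIcc]
      omega
    obtain ⟨i, hisd⟩ := hsd
    obtain ⟨hiIcc, hiT⟩ := Finset.mem_sdiff.1 hisd
    have hai : a ≤ i := (Finset.mem_Icc.1 hiIcc).1
    have hib : i ≤ b := (Finset.mem_Icc.1 hiIcc).2
    have hia : i ≠ a := fun hEq => hiT (hEq ▸ haT)
    have hibne : i ≠ b := fun hEq => hiT (hEq ▸ hbT)
    rcases le_max_iff.1 (vshape x hsort m' hai hib) with hf | hf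
    · -- replace a by i
      have hiE : i ∉ T.erase a := fun hmem => hiT (Finset.mem_of_mem_erase hmem)
      set T' := insert i (T.erase a) with hT'
      have hne' : T'.Nonempty := ⟨i, Finset.mem_insert_self _ _⟩
      have hcard' : T'.card = h := by
        rw [hT', Finset.card_insert_of_notMem hiE, Finset.card_erase_of_mem haT, hcard]
        omega
      have hgt : ∀ j ∈ T', a < j := by
        intro j hj
        rcases Finset.mem_insert.1 hj with rfl | hj
        · exact lt_of_le_of_ne hai (Ne.symm hia)
        · exact lt_of_le_of_ne (T.min'_le j (Finset.mem_of_mem_erase hj))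
            (Ne.symm (Finset.ne_of_mem_erase hj))
      have hltb : ∀ j ∈ T', j ≤ b := by
        intro j hj
        rcases Finset.mem_insert.1 hj with rfl | hj
        · exact hib
        · exact T.le_max' j (Finset.mem_of_mem_erase hj)
      have h1 : (a : ℕ) < (T'.min' hne' : ℕ) := hgt _ (T'.min'_mem hne')
      have h2 : (T'.max' hne' : ℕ) ≤ (b : ℕ) := hltb _ (T'.max'_mem hne')
      have h3 : (T'.min' hne' : ℕ) ≤ (T'.max' hne' : ℕ) :=
        T'.min'_le _ (T'.max'_mem hne')
      have hspan' : ((T'.max' hne' : ℕ) - (T'.min' hne' : ℕ)) < d := by omega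
      obtain ⟨k, hk, hsum⟩ := ih _ hspan' T' hne' hcard' rfl
      refine ⟨k, hk, hsum.trans ?_⟩
      rw [hT', Finset.sum_insert hiE]
      have hsplit : |x a - m'| + ∑ j ∈ T.erase a, |x j - m'| = ∑ j ∈ T, |x j - m'| :=
        Finset.add_sum_erase T (fun j => |x j - m'|) haT
      linarith
    · -- replace b by i
      have hiE : i ∉ T.erase b := fun hmem => hiT (Finset.mem_of_mem_erase hmem)
      set T' := insert i (T.erase b) with hT'
      have hne' : T'.Nonempty := ⟨i, Finset.mem_insert_self _ _⟩
      have hcard' : T'.card = h := by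
        rw [hT', Finset.card_insert_of_notMem hiE, Finset.card_erase_of_mem hbT, hcard]
        omega
      have hgt : ∀ j ∈ T', j < b := by
        intro j hj
        rcases Finset.mem_insert.1 hj with rfl | hj
        · exact lt_of_le_of_ne hib hibne
        · exact lt_of_le_of_ne (T.le_max' j (Finset.mem_of_mem_erase hj))
            (Finset.ne_of_mem_erase hj)
      have hltb : ∀ j ∈ T', a ≤ j := by
        intro j hj
        rcases Finset.mem_insert.1 hj with rfl | hj
        · exact hai
        · exact T.min'_le j (Finset.mem_of_mem_erase hj)
      have h1 : (T'.max' hne' : ℕ) < (b : ℕ) := hgt _ (T'.max'_mem hne')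
      have h2 : (a : ℕ) ≤ (T'.min' hne' : ℕ) := hltb _ (T'.min'_mem hne')
      have h3 : (T'.min' hne' : ℕ) ≤ (T'.max' hne' : ℕ) :=
        T'.min'_le _ (T'.max'_mem hne')
      have hspan' : ((T'.max' hne' : ℕ) - (T'.min' hne' : ℕ)) < d := by omega
      obtain ⟨k, hk, hsum⟩ := ih _ hspan' T' hne' hcard' rfl
      refine ⟨k, hk, hsum.trans ?_⟩
      rw [hT', Finset.sum_insert hiE]
      have hsplit : |x b - m'| + ∑ j ∈ T.erase b, |x j - m'| = ∑ j ∈ T, |x j - m'| :=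
        Finset.add_sum_erase T (fun j => |x j - m'|) hbT
      linarith

theorem ltad_univariate_contiguous (n h : ℕ) (hn : 2 ≤ n)
    (hh1 : (n + 1) / 2 ≤ h) (hh2 : h ≤ n)
    (x : Fin n → ℝ) (hsort : Monotone x) :
    ∃ k : ℕ, k + h ≤ n ∧ ∃ m : ℝ,
      (∀ m' : ℝ,
        ∑ i ∈ Finset.univ.filter (fun i : Fin n => k ≤ (i : ℕ) ∧ (i : ℕ) < k + h),
            |x i - m| ≤
          ∑ i ∈ Finset.univ.filter (fun i : Fin n => k ≤ (i : ℕ) ∧ (i : ℕ) < k + h),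
            |x i - m'|) ∧
      (∀ T : Finset (Fin n), T.card = h → ∀ m' : ℝ,
        ∑ i ∈ Finset.univ.filter (fun i : Fin n => k ≤ (i : ℕ) ∧ (i : ℕ) < k + h),
            |x i - m| ≤ ∑ i ∈ T, |x i - m'|) := by
  have hh : 1 ≤ h := le_trans (by omega) hh1
  choose m hm using fun k : ℕ => exists_min_abs x
    (Finset.univ.filter (fun i : Fin n => k ≤ (i : ℕ) ∧ (i : ℕ) < k + h))
  obtain ⟨k, hkmem, hkmin⟩ := Finset.exists_min_image (Finset.range (n - h + 1))
    (fun k => ∑ i ∈ Finset.univ.filter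
      (fun i : Fin n => k ≤ (i : ℕ) ∧ (i : ℕ) < k + h), |x i - m k|)
    ⟨0, Finset.mem_range.2 (by omega)⟩
  have hkn : k + h ≤ n := by
    have := Finset.mem_range.1 hkmem
    omega
  refine ⟨k, hkn, m k, fun m' => hm k m', ?_⟩
  intro T hT m'
  have hTne : T.Nonempty := Finset.card_pos.1 (by omega)
  obtain ⟨k', hk', hsum⟩ := window_le hh x hsort m' _ T hTne hT rfl
  have hk'mem : k' ∈ Finset.range (n - h + 1) := Finset.mem_range.2 (by omega)
  calc ∑ i ∈ Finset.univ.filter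
        (fun i : Fin n => k ≤ (i : ℕ) ∧ (i : ℕ) < k + h), |x i - m k|
      ≤ ∑ i ∈ Finset.univ.filter
        (fun i : Fin n => k' ≤ (i : ℕ) ∧ (i : ℕ) < k' + h), |x i - m k'| :=
        hkmin k' hk'mem
    _ ≤ ∑ i ∈ Finset.univ.filter
        (fun i : Fin n => k' ≤ (i : ℕ) ∧ (i : ℕ) < k' + h), |x i - m'| := hm k' m'
    _ ≤ ∑ i ∈ T, |x i - m'| := hsum
end

section
/- Let (w*, m*, d*) be an optimal solution of the linear program LP-LTAD: minimize ∑_{i,j} d_{ij} subject to ∑_i w_i = h, w_i x_{ij} − m_j ≤ d_{ij}, −w_i x_{ij} + m_j ≤ d_{ij}, 0 ≤ w_i ≤ 1. If m* = 0, then the optimal objective value equals ∑_{i=1}^n w*_i ‖x_i‖_1, and there exists an optimal solution with w* ∈ {0,1}^n having w*_i = 1 exactly for h indices with the smallest values of ‖x_i‖_1; hence the LP optimum equals the MILP-LTAD optimum (the same program with w ∈ {0,1}^n). -/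
/-- Feasibility for the continuous relaxation LP-LTAD (with `0 ≤ w ≤ 1`). -/
def LPFeasible (n p h : ℕ) (x : Fin n → Fin p → ℝ)
    (w : Fin n → ℝ) (m : Fin p → ℝ) (d : Fin n → Fin p → ℝ) : Prop :=
  (∑ i, w i) = (h : ℝ) ∧
  (∀ i j, w i * x i j - m j ≤ d i j) ∧
  (∀ i j, -(w i * x i j) + m j ≤ d i j) ∧
  (∀ i, 0 ≤ w i ∧ w i ≤ 1)

theorem lp_ltad_integrality (n p h : ℕ) (hh1 : 1 ≤ h) (hh2 : h ≤ n)
    (x : Fin n → Fin p → ℝ)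
    (w : Fin n → ℝ) (m : Fin p → ℝ) (d : Fin n → Fin p → ℝ)
    (hfeas : LPFeasible n p h x w m d)
    (hopt : ∀ w' m' d', LPFeasible n p h x w' m' d' →
      (∑ i, ∑ j, d i j) ≤ ∑ i, ∑ j, d' i j)
    (hm : m = 0) :
    (∑ i, ∑ j, d i j) = (∑ i, w i * ∑ j, |x i j|) ∧
    ∃ (w' : Fin n → ℝ) (m' : Fin p → ℝ) (d' : Fin n → Fin p → ℝ),
      (∀ i, w' i = 0 ∨ w' i = 1) ∧
      LPFeasible n p h x w' m' d' ∧
      (∀ i k, w' i = 1 → w' k = 0 → (∑ j, |x i j|) ≤ ∑ j, |x k j|) ∧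
      (∑ i, ∑ j, d' i j) = (∑ i, ∑ j, d i j) ∧
      (∀ (w'' : Fin n → ℝ) (m'' : Fin p → ℝ) (d'' : Fin n → Fin p → ℝ),
        (∀ i, w'' i = 0 ∨ w'' i = 1) → LPFeasible n p h x w'' m'' d'' →
        (∑ i, ∑ j, d i j) ≤ ∑ i, ∑ j, d'' i j) := by
  obtain ⟨hsum, hc1, hc2, hbd⟩ := hfeas
  subst hm
  set v : Fin n → ℝ := fun i => ∑ j, |x i j| with hv
  -- any (w₀,0,d₀) with 0 ≤ w₀ and d₀ = w₀ * |x| is feasible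
  have hfeas0 : ∀ w₀ : Fin n → ℝ, (∑ i, w₀ i) = (h : ℝ) → (∀ i, 0 ≤ w₀ i ∧ w₀ i ≤ 1) →
      LPFeasible n p h x w₀ 0 (fun i j => w₀ i * |x i j|) := by
    intro w₀ hs hb
    refine ⟨hs, ?_, ?_, hb⟩
    · intro i j
      simp only [Pi.zero_apply, sub_zero]
      calc w₀ i * x i j ≤ |w₀ i * x i j| := le_abs_self _
        _ = w₀ i * |x i j| := by rw [abs_mul, abs_of_nonneg (hb i).1]
    · intro i j
      simp only [Pi.zero_apply, add_zero]
      calc -(w₀ i * x i j) ≤ |w₀ i * x i j| := neg_le_abs _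
        _ = w₀ i * |x i j| := by rw [abs_mul, abs_of_nonneg (hb i).1]
  have hobj0 : ∀ w₀ : Fin n → ℝ,
      (∑ i, ∑ j, w₀ i * |x i j|) = ∑ i, w₀ i * v i := by
    intro w₀
    refine Finset.sum_congr rfl fun i _ => ?_
    rw [hv, Finset.mul_sum]
  -- lower bound on d
  have hd_lb : ∀ i j, w i * |x i j| ≤ d i j := by
    intro i j
    have h1 := hc1 i j
    have h2 := hc2 i j
    simp only [Pi.zero_apply, sub_zero, add_zero] at h1 h2
    have : |w i * x i j| ≤ d i j := abs_le.mpr ⟨by linarith, h1⟩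
    rwa [abs_mul, abs_of_nonneg (hbd i).1] at this
  have key1 : (∑ i, ∑ j, d i j) = ∑ i, w i * v i := by
    refine le_antisymm ?_ ?_
    · have := hopt w 0 (fun i j => w i * |x i j|) (hfeas0 w hsum hbd)
      calc (∑ i, ∑ j, d i j) ≤ ∑ i, ∑ j, w i * |x i j| := this
        _ = ∑ i, w i * v i := hobj0 w
    · rw [← hobj0 w]
      exact Finset.sum_le_sum fun i _ => Finset.sum_le_sum fun j _ => hd_lb i j
  refine ⟨key1, ?_⟩
  -- construct the integral solution
  set σ : Equiv.Perm (Fin n) := Tuple.sort v with hσ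
  have hmono : Monotone (v ∘ σ) := Tuple.monotone_sort v
  set w' : Fin n → ℝ := fun i => if ((σ.symm i : Fin n) : ℕ) < h then 1 else 0 with hw'
  have hw01 : ∀ i, w' i = 0 ∨ w' i = 1 := by
    intro i; rw [hw']; dsimp only; split <;> simp
  have hsum' : (∑ i, w' i) = (h : ℝ) := by
    rw [← Equiv.sum_comp σ w']
    have : ∀ k : Fin n, w' (σ k) = if (k : ℕ) < h then (1 : ℝ) else 0 := by
      intro k; simp only [hw', Equiv.symm_apply_apply]
    rw [Finset.sum_congr rfl fun k _ => this k]
    rw [Fin.sum_univ_eq_sum_range (fun k => if k < h then (1 : ℝ) else 0)]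
    have hfil : (Finset.range n).filter (· < h) = Finset.range h := by
      ext a; simp only [Finset.mem_filter, Finset.mem_range]; omega
    rw [← Finset.sum_filter, hfil]
    simp
  have hbd' : ∀ i, 0 ≤ w' i ∧ w' i ≤ 1 := by
    intro i; rcases hw01 i with h0 | h0 <;> rw [h0] <;> norm_num
  -- threshold
  have hh1n : h - 1 < n := by omega
  set t : ℝ := v (σ ⟨h - 1, hh1n⟩) with ht
  have hle : ∀ i, w' i = 1 → v i ≤ t := by
    intro i hi
    have hlt : ((σ.symm i : Fin n) : ℕ) < h := by
      by_contra hcon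
      rw [hw'] at hi; simp only [if_neg hcon] at hi; norm_num at hi
    have : v i = (v ∘ σ) (σ.symm i) := by simp
    rw [this, ht]
    exact hmono (by simp only [Fin.le_def]; omega)
  have hge : ∀ i, w' i = 0 → t ≤ v i := by
    intro i hi
    have hlt : ¬ ((σ.symm i : Fin n) : ℕ) < h := by
      by_contra hcon
      rw [hw'] at hi; simp only [if_pos hcon] at hi; norm_num at hi
    have : v i = (v ∘ σ) (σ.symm i) := by simp
    rw [this, ht]
    exact hmono (by simp only [Fin.le_def]; omega)
  -- key exchange inequality
  have hexch : (∑ i, w' i * v i) ≤ ∑ i, w i * v i := by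
    have hnn : 0 ≤ ∑ i, (w i - w' i) * (v i - t) := by
      refine Finset.sum_nonneg fun i _ => ?_
      rcases hw01 i with h0 | h0
      · exact mul_nonneg (by rw [h0]; simpa using (hbd i).1) (by linarith [hge i h0])
      · nlinarith [(hbd i).2, hle i h0]
    have hexpand : (∑ i, (w i - w' i) * (v i - t))
        = (∑ i, w i * v i) - (∑ i, w' i * v i)
          - ((∑ i, w i * t) - (∑ i, w' i * t)) := by
      rw [← Finset.sum_sub_distrib, ← Finset.sum_sub_distrib, ← Finset.sum_sub_distrib]
      exact Finset.sum_congr rfl fun i _ => by ring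
    have e1 : (∑ i, w i * t) = (h : ℝ) * t := by rw [← Finset.sum_mul, hsum]
    have e2 : (∑ i, w' i * t) = (h : ℝ) * t := by rw [← Finset.sum_mul, hsum']
    rw [hexpand, e1, e2] at hnn
    linarith
  refine ⟨w', 0, fun i j => w' i * |x i j|, hw01, hfeas0 w' hsum' hbd', ?_, ?_, ?_⟩
  · intro i k hi hk
    exact le_trans (hle i hi) (hge k hk)
  · refine le_antisymm ?_ (hopt w' 0 _ (hfeas0 w' hsum' hbd'))
    calc (∑ i, ∑ j, w' i * |x i j|) = ∑ i, w' i * v i := hobj0 w'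
      _ ≤ ∑ i, w i * v i := hexch
      _ = ∑ i, ∑ j, d i j := key1.symm
  · intro w'' m'' d'' _ hf
    exact hopt w'' m'' d'' hf
end
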